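/- Let ρ⁰₁ = |0⟩⟨0| ⊗ₖ (½ I₂) be the two-qubit state on ℂ² ⊗ ℂ² (so ρ⁰₁ is diagonal with entries ½, ½, 0, 0 on the basis |00⟩,|01⟩,|10⟩,|11⟩), and for θ ∈ ℝ let R_θ be the 4×4 matrix that fixes |00⟩ and |11⟩ and acts on span{|01⟩,|10⟩} by R_θ|01⟩ = cos θ |01⟩ + sin θ |10⟩ and R_θ|10⟩ = −sin θ |01⟩ + cos θ |10⟩. Then R_θ is unitary, and for every θ with 0 < θ < π/2 the partial transpose on the first factor of R_θ ρ⁰₁ R_θ† is not positive semidefinite; in particular ⟨11| PT(R_θ ρ⁰₁ R_θ†) |11⟩ = 0 while ⟨00| PT(R_θ ρ⁰₁ R_θ†) |11⟩ = ½ cos θ sin θ ≠ 0. -/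
import Mathlib


open Matrix Kronecker
open scoped ComplexOrder

/-- Partial transpose on the first factor of a bipartite matrix. -/
def PT {A B : Type*} (M : Matrix (A × B) (A × B) ℂ) : Matrix (A × B) (A × B) ℂ :=
  Matrix.of fun p q => M (q.1, p.2) (p.1, q.2)

/-- The two-qubit state `ρ⁰₁ = |0⟩⟨0| ⊗ₖ (½ I₂)`. -/
noncomputable def rho01 : Matrix (Fin 2 × Fin 2) (Fin 2 × Fin 2) ℂ :=
  (Matrix.of fun i j : Fin 2 => if i = 0 ∧ j = 0 then (1 : ℂ) else 0) ⊗ₖ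
    ((1 / 2 : ℂ) • (1 : Matrix (Fin 2) (Fin 2) ℂ))

/-- The rotation `R_θ` fixing `|00⟩, |11⟩` and rotating by angle `θ` in
`span{|01⟩, |10⟩}`. -/
noncomputable def R (θ : ℝ) : Matrix (Fin 2 × Fin 2) (Fin 2 × Fin 2) ℂ :=
  Matrix.of fun p q : Fin 2 × Fin 2 =>
    if p = q ∧ (p = (0, 0) ∨ p = (1, 1)) then 1
    else if p = (0, 1) ∧ q = (0, 1) then (Real.cos θ : ℂ)
    else if p = (1, 0) ∧ q = (0, 1) then (Real.sin θ : ℂ)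
    else if p = (0, 1) ∧ q = (1, 0) then -(Real.sin θ : ℂ)
    else if p = (1, 0) ∧ q = (1, 0) then (Real.cos θ : ℂ)
    else 0

/-- `R_θ` is unitary, and for `0 < θ < π/2` the partial transpose (on the
first factor) of `R_θ ρ⁰₁ R_θ†` is not positive semidefinite; in particular its
`(|11⟩,|11⟩)` entry vanishes while its `(|00⟩,|11⟩)` entry is `½ cos θ sin θ ≠ 0`. -/
theorem stmt1 (θ : ℝ) :
    R θ ∈ Matrix.unitaryGroup (Fin 2 × Fin 2) ℂ ∧
    (0 < θ → θ < Real.pi / 2 →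
      ¬ (PT (R θ * rho01 * (R θ)ᴴ)).PosSemidef ∧
      PT (R θ * rho01 * (R θ)ᴴ) (1, 1) (1, 1) = 0 ∧
      PT (R θ * rho01 * (R θ)ᴴ) (0, 0) (1, 1)
        = (1 / 2 : ℂ) * (Real.cos θ : ℂ) * (Real.sin θ : ℂ) ∧
      (1 / 2 : ℂ) * (Real.cos θ : ℂ) * (Real.sin θ : ℂ) ≠ 0) := by
  constructor
  · rw [Matrix.mem_unitaryGroup_iff]
    ext p q
    simp only [Matrix.mul_apply, Fintype.sum_prod_type, Fin.sum_univ_two, R,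
      star_eq_conjTranspose, Matrix.conjTranspose_apply, Matrix.of_apply]
    fin_cases p <;> fin_cases q <;>
      simp [Prod.ext_iff, ← Complex.ofReal_sin, ← Complex.ofReal_cos, Complex.conj_ofReal] <;>
      first
        | ring1
        | (ring_nf; norm_cast; nlinarith [Real.sin_sq_add_cos_sq θ])
  · intro h1 h2
    have hc : 0 < Real.cos θ :=
      Real.cos_pos_of_mem_Ioo ⟨by linarith [Real.pi_pos], h2⟩
    have hs : 0 < Real.sin θ :=
      Real.sin_pos_of_pos_of_lt_pi h1 (by linarith [Real.pi_pos])
    refine ⟨?_, ?_, ?_, ?_⟩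
    · intro h
      set t : ℝ := Real.cos θ * Real.sin θ with ht
      have key := h.re_dotProduct_nonneg
        (fun p => if p = (1, 1) then 1 else if p = (0, 0) then (-(t : ℝ) : ℂ) else 0)
      simp [dotProduct, Matrix.mulVec, Fintype.sum_prod_type, Fin.sum_univ_two, PT, R, rho01,
        Matrix.mul_apply, Matrix.one_apply, Prod.ext_iff, ← Complex.ofReal_sin,
        ← Complex.ofReal_cos, Complex.conj_ofReal, ← Complex.ofReal_mul, ← Complex.ofReal_neg,
        ← Complex.ofReal_add, ht] at key
      nlinarith [mul_pos hc hs, sq_nonneg (Real.cos θ * Real.sin θ)]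
    · simp [PT, R, rho01, Matrix.mul_apply, Fintype.sum_prod_type, Fin.sum_univ_two,
        Matrix.one_apply, Prod.ext_iff]
    · simp [PT, R, rho01, Matrix.mul_apply, Fintype.sum_prod_type, Fin.sum_univ_two,
        Matrix.one_apply, Prod.ext_iff, ← Complex.ofReal_sin, ← Complex.ofReal_cos,
        Complex.conj_ofReal]
      ring
    · exact mul_ne_zero (mul_ne_zero (by norm_num)
        (Complex.ofReal_ne_zero.mpr hc.ne')) (Complex.ofReal_ne_zero.mpr hs.ne')
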